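/- Let m ≥ c·P·log P balls have weights that are independent geometrically distributed random variables with expectation μ, and let the balls be placed independently and uniformly at random into P bins. Then with high probability in P, every bin receives total weight O(μ·m/P). -/

import Mathlib

open MeasureTheory ProbabilityTheory
open scoped ENNReal

/-!
Chernoff bound for one bin, then a union bound over the bins. With the tilt `t = 1 / (2μ)` a
geometric weight `W` of mean `μ` has `E e^{tW} ≤ 4`, so the contribution of one ball to a fixed
bin `b` satisfies `E e^{t W 1[X = b]} ≤ 1 - 1/P + 4/P ≤ e^{3/P}`. By independence of the balls
the load `L_b` of bin `b` has `E e^{t L_b} ≤ e^{3m/P}`, and Markov's inequality gives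
`P(L_b ≥ (6 + 4/c) μ m / P) ≤ e^{-2m/(cP)} ≤ P^{-2}` as soon as `m ≥ c P log P`.
Summing over the `P` bins leaves a failure probability of at most `P^{-1}`.
-/

lemma Real.exp_mul_one_sub_le_one (x : ℝ) : Real.exp x * (1 - x) ≤ 1 :=
  calc Real.exp x * (1 - x) ≤ Real.exp x * Real.exp (-x) :=
        mul_le_mul_of_nonneg_left (Real.one_sub_le_exp_neg x) (Real.exp_pos x).le
    _ = 1 := by rw [← Real.exp_add, add_neg_cancel, Real.exp_zero]

lemma one_sub_two_mul_mul_exp_le {s : ℝ} (hs : s ≤ 1 / 2) :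
    (1 - 2 * s) * Real.exp s ≤ 1 - s := by
  have h := mul_le_mul_of_nonneg_left (Real.exp_mul_one_sub_le_one s)
    (by linarith : (0 : ℝ) ≤ 1 - 2 * s)
  nlinarith [sq_nonneg s, Real.exp_pos s]

lemma tsum_geometric_tilt_le_four {p : ℝ} (hp0 : 0 < p) (hp1 : p ≤ 1) :
    ∑' k : ℕ, ENNReal.ofReal (Real.exp (p / 2 * (k + 1 : ℕ)) * (p * (1 - p) ^ k)) ≤ 4 := by
  obtain ⟨s, hs⟩ : ∃ s, s = p / 2 := ⟨_, rfl⟩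
  have hterm (k : ℕ) : Real.exp (p / 2 * (k + 1 : ℕ)) * (p * (1 - p) ^ k)
      = p * Real.exp s * ((1 - p) * Real.exp s) ^ k := by
    rw [mul_pow, Nat.cast_succ, mul_add_one, Real.exp_add, mul_comm (p / 2), Real.exp_nat_mul, hs]
    ring
  have hr1 : (1 - p) * Real.exp s ≤ 1 - s := by
    have h := one_sub_two_mul_mul_exp_le (s := s) (by linarith)
    rwa [hs, mul_div_cancel₀ _ two_ne_zero, ← hs] at h
  have hr0 : 0 ≤ (1 - p) * Real.exp s := mul_nonneg (by linarith) (Real.exp_pos s).le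
  have hexp : Real.exp s ≤ 2 := by
    nlinarith [Real.exp_mul_one_sub_le_one s, Real.exp_pos s]
  simp_rw [hterm]
  generalize (1 - p) * Real.exp s = r at hr0 hr1
  rw [← ENNReal.ofReal_tsum_of_nonneg (fun k => by positivity)
      ((summable_geometric_of_lt_one hr0 (by linarith)).mul_left _),
    tsum_mul_left, tsum_geometric_of_lt_one hr0 (by linarith), ← ENNReal.ofReal_ofNat]
  refine ENNReal.ofReal_le_ofReal ?_
  calc p * Real.exp s * (1 - r)⁻¹ ≤ p * 2 * s⁻¹ :=
        mul_le_mul (mul_le_mul_of_nonneg_left hexp hp0.le) (inv_anti₀ (by linarith) (by linarith))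
          (inv_nonneg.2 (by linarith)) (by positivity)
    _ = 4 := by rw [hs]; field_simp; norm_num

lemma ENNReal.one_sub_add_mul_four_le_ofReal_exp {q : ℝ≥0∞} (hq : q ≤ 1) :
    1 - q + q * 4 ≤ ENNReal.ofReal (Real.exp (3 * q.toReal)) := by
  have hq_top : q ≠ ⊤ := ne_top_of_le_ne_top ENNReal.one_ne_top hq
  have hsum : 1 - q + q * 4 = ENNReal.ofReal (1 + 3 * q.toReal) := by
    rw [show (4 : ℝ≥0∞) = 1 + 3 by norm_num, mul_add, mul_one, ← add_assoc,
      tsub_add_cancel_of_le hq, ENNReal.ofReal_add zero_le_one (by positivity),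
      ENNReal.ofReal_one, ENNReal.ofReal_mul (by norm_num), ENNReal.ofReal_toReal hq_top,
      mul_comm]
    norm_num
  rw [hsum]
  exact ENNReal.ofReal_le_ofReal (by linarith [Real.add_one_le_exp (3 * q.toReal)])

section Measure

variable {Ω : Type*} [MeasurableSpace Ω] {μ : Measure Ω}

lemma lintegral_comp_eq_tsum {α : Type*} [MeasurableSpace α] [Countable α]
    [MeasurableSingletonClass α] {W : Ω → α} (hW : Measurable W) (g : α → ℝ≥0∞) :
    ∫⁻ ω, g (W ω) ∂μ = ∑' a, g a * μ {ω | W ω = a} := by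
  rw [← lintegral_map (measurable_of_countable g) hW, lintegral_countable']
  simp_rw [Measure.map_apply hW (measurableSet_singleton _)]
  rfl

lemma measure_eq_zero_of_tsum_succ_eq_one [IsProbabilityMeasure μ] {W : Ω → ℕ}
    (hW : Measurable W) (h : ∑' n, μ {ω | W ω = n + 1} = 1) : μ {ω | W ω = 0} = 0 := by
  have htot : ∑' n, μ {ω | W ω = n} = 1 := by
    simpa using (lintegral_comp_eq_tsum (μ := μ) hW 1).symm
  rw [tsum_eq_zero_add' ENNReal.summable, h] at htot
  simpa using htot

lemma lintegral_exp_geometric_le_four [IsProbabilityMeasure μ] {W : Ω → ℕ} (hW : Measurable W)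
    {p : ℝ} (hp0 : 0 < p) (hp1 : p ≤ 1)
    (hpmf : ∀ j : ℕ, 1 ≤ j → μ {ω | W ω = j} = ENNReal.ofReal (p * (1 - p) ^ (j - 1))) :
    ∫⁻ ω, ENNReal.ofReal (Real.exp (p / 2 * W ω)) ∂μ ≤ 4 := by
  have hsucc (k : ℕ) : μ {ω | W ω = k + 1} = ENNReal.ofReal (p * (1 - p) ^ k) := by
    simpa using hpmf (k + 1) le_add_self
  have hzero : μ {ω | W ω = 0} = 0 := by
    refine measure_eq_zero_of_tsum_succ_eq_one hW ?_
    simp_rw [hsucc]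
    rw [← ENNReal.ofReal_tsum_of_nonneg
        (fun k => mul_nonneg hp0.le (pow_nonneg (by linarith) k))
        ((summable_geometric_of_lt_one (by linarith) (by linarith)).mul_left _),
      tsum_mul_left, tsum_geometric_of_lt_one (by linarith) (by linarith), sub_sub_cancel,
      mul_inv_cancel₀ hp0.ne', ENNReal.ofReal_one]
  rw [lintegral_comp_eq_tsum hW (fun n : ℕ => ENNReal.ofReal (Real.exp (p / 2 * n))),
    tsum_eq_zero_add' ENNReal.summable, hzero, mul_zero, zero_add]
  simp_rw [hsucc, ← ENNReal.ofReal_mul (Real.exp_nonneg _)]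
  exact tsum_geometric_tilt_le_four hp0 hp1

lemma lintegral_ite_eq_of_indepFun [IsProbabilityMeasure μ] {β : Type*} [MeasurableSpace β]
    [MeasurableSingletonClass β] [DecidableEq β] {X : Ω → β} {Y : Ω → ℝ≥0∞} (hX : Measurable X)
    (hY : Measurable Y) (hXY : IndepFun X Y μ) (b : β) :
    ∫⁻ ω, (if X ω = b then Y ω else 1) ∂μ
      = μ {ω | X ω ≠ b} + μ {ω | X ω = b} * ∫⁻ ω, Y ω ∂μ := by
  have hb : MeasurableSet ({b} : Set β) := measurableSet_singleton b
  have heq : MeasurableSet {ω | X ω = b} := hX hb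
  have hne : MeasurableSet {ω | X ω ≠ b} := hX hb.compl
  have hsplit : (fun ω => if X ω = b then Y ω else 1)
      = fun ω => {ω | X ω ≠ b}.indicator 1 ω + {ω | X ω = b}.indicator 1 ω * Y ω := by
    funext ω
    by_cases h : X ω = b <;> simp [h]
  have hindep : IndepFun (fun ω => {ω | X ω = b}.indicator (1 : Ω → ℝ≥0∞) ω) Y μ :=
    hXY.comp (measurable_one.indicator hb) measurable_id
  rw [hsplit, lintegral_add_left (measurable_one.indicator hne),
    lintegral_mul_eq_lintegral_mul_lintegral_of_indepFun''
      (measurable_one.indicator heq).aemeasurable hY.aemeasurable hindep,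
    lintegral_indicator_one hne, lintegral_indicator_one heq]

lemma lintegral_ite_exp_le [IsProbabilityMeasure μ] {β : Type*} [MeasurableSpace β]
    [MeasurableSingletonClass β] [DecidableEq β] {X : Ω → β} {W : Ω → ℕ} (hX : Measurable X)
    (hW : Measurable W) (hXW : IndepFun X W μ) (b : β) {t : ℝ}
    (hmgf : ∫⁻ ω, ENNReal.ofReal (Real.exp (t * W ω)) ∂μ ≤ 4) :
    ∫⁻ ω, (if X ω = b then ENNReal.ofReal (Real.exp (t * W ω)) else 1) ∂μ
      ≤ ENNReal.ofReal (Real.exp (3 * (μ {ω | X ω = b}).toReal)) := by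
  have hexp : Measurable fun n : ℕ => ENNReal.ofReal (Real.exp (t * n)) :=
    measurable_of_countable _
  have hY : Measurable fun ω => ENNReal.ofReal (Real.exp (t * W ω)) := hexp.comp hW
  rw [lintegral_ite_eq_of_indepFun hX hY (hXW.comp measurable_id hexp) b,
    show {ω | X ω ≠ b} = {ω | X ω = b}ᶜ from rfl,
    prob_compl_eq_one_sub (s := {ω | X ω = b}) (hX (measurableSet_singleton b))]
  calc 1 - μ {ω | X ω = b} + μ {ω | X ω = b} * ∫⁻ ω, ENNReal.ofReal (Real.exp (t * W ω)) ∂μ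
      ≤ 1 - μ {ω | X ω = b} + μ {ω | X ω = b} * 4 := by gcongr
    _ ≤ _ := ENNReal.one_sub_add_mul_four_le_ofReal_exp prob_le_one

lemma measure_ge_le_lintegral_exp_div {S : Ω → ℝ} {t : ℝ} (ht : 0 ≤ t)
    (hS : AEMeasurable (fun ω => ENNReal.ofReal (Real.exp (t * S ω))) μ) (a : ℝ) :
    μ {ω | a ≤ S ω}
      ≤ (∫⁻ ω, ENNReal.ofReal (Real.exp (t * S ω)) ∂μ) / ENNReal.ofReal (Real.exp (t * a)) :=
  (measure_mono fun ω (h : a ≤ S ω) =>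
      ENNReal.ofReal_le_ofReal (Real.exp_le_exp.2 (mul_le_mul_of_nonneg_left h ht))).trans
    (meas_ge_le_lintegral_div hS (by simp [Real.exp_pos]) ENNReal.ofReal_ne_top)

lemma one_sub_card_mul_le_measure_forall [IsProbabilityMeasure μ] {ι : Type*} [Fintype ι]
    {p : ι → Ω → Prop} {ε : ℝ≥0∞} (h : ∀ i, μ {ω | ¬ p i ω} ≤ ε) :
    1 - Fintype.card ι * ε ≤ μ {ω | ∀ i, p i ω} := by
  have hcompl : {ω | ∀ i, p i ω}ᶜ = ⋃ i, {ω | ¬ p i ω} := by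
    ext ω
    simp
  rw [tsub_le_iff_right, ← measure_univ (μ := μ)]
  calc μ Set.univ ≤ μ {ω | ∀ i, p i ω} + μ {ω | ∀ i, p i ω}ᶜ := measure_univ_le_add_compl _
    _ ≤ μ {ω | ∀ i, p i ω} + Fintype.card ι * ε := by
        gcongr
        rw [hcompl]
        calc μ (⋃ i, {ω | ¬ p i ω}) ≤ ∑ i, μ {ω | ¬ p i ω} := measure_iUnion_fintype_le _ _
          _ ≤ ∑ _i : ι, ε := Finset.sum_le_sum fun i _ => h i
          _ = Fintype.card ι * ε := by simp

end Measure

section BinLoad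

variable {Ω ι β : Type*} [Fintype ι] [DecidableEq β]

def binLoad (X : ι → Ω → β) (W : ι → Ω → ℕ) (b : β) (ω : Ω) : ℝ :=
  ∑ i ∈ Finset.univ.filter (fun i => X i ω = b), (W i ω : ℝ)

noncomputable def binFactor (b : β) (t : ℝ) (xw : β × ℕ) : ℝ≥0∞ :=
  if xw.1 = b then ENNReal.ofReal (Real.exp (t * xw.2)) else 1

lemma measurable_binFactor [MeasurableSpace β] [MeasurableSingletonClass β] (b : β) (t : ℝ) :
    Measurable (binFactor b t) :=
  Measurable.ite (measurable_fst (measurableSet_singleton b))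
    ((measurable_of_countable fun n : ℕ => ENNReal.ofReal (Real.exp (t * n))).comp measurable_snd)
    measurable_const

lemma ofReal_exp_mul_binLoad (X : ι → Ω → β) (W : ι → Ω → ℕ) (b : β) (t : ℝ) (ω : Ω) :
    ENNReal.ofReal (Real.exp (t * binLoad X W b ω)) = ∏ i, binFactor b t (X i ω, W i ω) := by
  rw [binLoad, Finset.mul_sum, Real.exp_sum,
    ENNReal.ofReal_prod_of_nonneg (fun _ _ => (Real.exp_pos _).le), Finset.prod_filter]
  rfl

variable [MeasurableSpace Ω] {μ : Measure Ω} [MeasurableSpace β] [MeasurableSingletonClass β]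
  {X : ι → Ω → β} {W : ι → Ω → ℕ}

lemma lintegral_exp_mul_binLoad_le (hX : ∀ i, Measurable (X i)) (hW : ∀ i, Measurable (W i))
    (hind : iIndepFun (fun i ω => (X i ω, W i ω)) μ) (b : β) (t : ℝ) {B : ℝ≥0∞}
    (hB : ∀ i, ∫⁻ ω, binFactor b t (X i ω, W i ω) ∂μ ≤ B) :
    ∫⁻ ω, ENNReal.ofReal (Real.exp (t * binLoad X W b ω)) ∂μ ≤ B ^ Fintype.card ι := by
  simp_rw [ofReal_exp_mul_binLoad]
  rw [lintegral_prod_eq_prod_lintegral_of_indepFun _ (fun i ω => binFactor b t (X i ω, W i ω))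
      (hind.comp _ fun _ => measurable_binFactor b t)
      fun i => (measurable_binFactor b t).comp ((hX i).prodMk (hW i))]
  calc ∏ i, ∫⁻ ω, binFactor b t (X i ω, W i ω) ∂μ ≤ ∏ _i : ι, B :=
        Finset.prod_le_prod' fun i _ => hB i
    _ = B ^ Fintype.card ι := Finset.prod_const B

lemma measure_binLoad_ge_le [IsProbabilityMeasure μ] (hX : ∀ i, Measurable (X i))
    (hW : ∀ i, Measurable (W i)) (hind : iIndepFun (fun i ω => (X i ω, W i ω)) μ)
    (hXW : ∀ i, IndepFun (X i) (W i) μ) {b : β} {q : ℝ≥0∞}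
    (hXb : ∀ i, μ {ω | X i ω = b} = q) {t : ℝ} (ht : 0 ≤ t)
    (hmgf : ∀ i, ∫⁻ ω, ENNReal.ofReal (Real.exp (t * W i ω)) ∂μ ≤ 4) (a : ℝ) :
    μ {ω | a ≤ binLoad X W b ω}
      ≤ ENNReal.ofReal (Real.exp (3 * Fintype.card ι * q.toReal - t * a)) := by
  have hB (i : ι) :
      ∫⁻ ω, binFactor b t (X i ω, W i ω) ∂μ ≤ ENNReal.ofReal (Real.exp (3 * q.toReal)) :=
    hXb i ▸ lintegral_ite_exp_le (hX i) (hW i) (hXW i) b (hmgf i)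
  have hmeas : AEMeasurable (fun ω => ENNReal.ofReal (Real.exp (t * binLoad X W b ω))) μ := by
    simp_rw [ofReal_exp_mul_binLoad]
    exact (Finset.measurable_prod _ fun i _ =>
      (measurable_binFactor b t).comp ((hX i).prodMk (hW i))).aemeasurable
  calc μ {ω | a ≤ binLoad X W b ω}
      ≤ (∫⁻ ω, ENNReal.ofReal (Real.exp (t * binLoad X W b ω)) ∂μ)
          / ENNReal.ofReal (Real.exp (t * a)) := measure_ge_le_lintegral_exp_div ht hmeas a
    _ ≤ ENNReal.ofReal (Real.exp (3 * q.toReal)) ^ Fintype.card ι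
          / ENNReal.ofReal (Real.exp (t * a)) := by
        gcongr
        exact lintegral_exp_mul_binLoad_le hX hW hind b t hB
    _ = ENNReal.ofReal (Real.exp (3 * Fintype.card ι * q.toReal - t * a)) := by
        rw [← ENNReal.ofReal_pow (Real.exp_nonneg _), ← Real.exp_nat_mul,
          ← ENNReal.ofReal_div_of_pos (Real.exp_pos _), ← Real.exp_sub]
        ring_nf

end BinLoad

lemma exp_tilt_sub_le_rpow_neg_two {c μ : ℝ} {P m : ℕ} (hc : 0 < c) (hμ : 0 < μ) (hP : 0 < P)
    (hm : c * P * Real.log P ≤ m) :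
    Real.exp (3 * m * (P : ℝ)⁻¹ - 1 / μ / 2 * ((6 + 4 / c) * μ * m / P))
      ≤ (P : ℝ) ^ (-2 : ℝ) := by
  have hP' : (0 : ℝ) < P := Nat.cast_pos.2 hP
  have hexponent : 3 * m * (P : ℝ)⁻¹ - 1 / μ / 2 * ((6 + 4 / c) * μ * m / P)
      = -(2 / c * (m / P)) := by
    field_simp
    ring
  have hlog : 2 * Real.log P ≤ 2 / c * (m / P) := by
    rw [div_mul_div_comm, le_div_iff₀ (by positivity)]
    nlinarith
  rw [hexponent, Real.rpow_def_of_pos hP']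
  exact Real.exp_le_exp.2 (by linarith)

/-- m ≥ c·P·log P balls with independent geometric weights of expectation μ,
placed independently uniformly at random into P bins; whp every bin gets weight O(μ·m/P). -/
theorem stmt_4 :
    ∀ c : ℝ, 0 < c → ∃ C : ℝ, 0 < C ∧ ∃ c' : ℝ, 1 ≤ c' ∧
    ∀ (P m : ℕ), 2 ≤ P → (c * P * Real.log P ≤ (m : ℝ)) →
    ∀ (μ : ℝ), 1 ≤ μ →
    ∀ (Ω : Type) [MeasureSpace Ω] [IsProbabilityMeasure (ℙ : Measure Ω)]
      (X : Fin m → Ω → Fin P) (W : Fin m → Ω → ℕ),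
      (∀ i, Measurable (X i)) → (∀ i, Measurable (W i)) →
      iIndepFun (fun i ω => (X i ω, W i ω)) ℙ →
      (∀ i, IndepFun (X i) (W i) ℙ) →
      (∀ i b, ℙ {ω | X i ω = b} = (P : ENNReal)⁻¹) →
      (∀ i, ∀ j : ℕ, 1 ≤ j →
        ℙ {ω | W i ω = j} = ENNReal.ofReal ((1 / μ) * (1 - 1 / μ) ^ (j - 1))) →
      1 - ENNReal.ofReal ((P : ℝ) ^ (-c')) ≤
        ℙ {ω | ∀ b : Fin P,
          (∑ i ∈ Finset.univ.filter (fun i => X i ω = b), (W i ω : ℝ)) ≤ C * μ * m / P} := by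
  intro c hc
  refine ⟨6 + 4 / c, by positivity, 1, le_rfl, ?_⟩
  intro P m hP hm μ hμ Ω _ _ X W hX hW hind hXW hXunif hWgeom
  have hμ0 : 0 < μ := zero_lt_one.trans_le hμ
  have hmgf (i : Fin m) : ∫⁻ ω, ENNReal.ofReal (Real.exp (1 / μ / 2 * W i ω)) ≤ 4 :=
    lintegral_exp_geometric_le_four (hW i) (by positivity) (div_le_one_of_le₀ hμ hμ0.le)
      (hWgeom i)
  have htail (b : Fin P) : ℙ {ω | ¬ binLoad X W b ω ≤ (6 + 4 / c) * μ * m / P}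
      ≤ ENNReal.ofReal ((P : ℝ) ^ (-2 : ℝ)) := by
    refine (measure_mono fun ω h => (not_le.1 h).le).trans ?_
    have hbin := measure_binLoad_ge_le hX hW hind hXW (fun i => hXunif i b) (by positivity)
      hmgf ((6 + 4 / c) * μ * m / P)
    simp only [Fintype.card_fin, ENNReal.toReal_inv, ENNReal.toReal_natCast] at hbin
    exact hbin.trans (ENNReal.ofReal_le_ofReal (exp_tilt_sub_le_rpow_neg_two hc hμ0 (by omega) hm))
  have hcard : Fintype.card (Fin P) * ENNReal.ofReal ((P : ℝ) ^ (-2 : ℝ))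
      = ENNReal.ofReal ((P : ℝ) ^ (-1 : ℝ)) := by
    rw [Fintype.card_fin, ← ENNReal.ofReal_natCast, ← ENNReal.ofReal_mul (Nat.cast_nonneg _),
      ← Real.rpow_one_add' (Nat.cast_nonneg _) (by norm_num)]
    norm_num
  exact hcard ▸ one_sub_card_mul_le_measure_forall htail
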